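/- arXiv:2211.00894 — 5 statements merged into one kernel-verified Lean document; each statement's English description precedes it below -/
import Mathlib

section
/- For Ω = Θ Π P Π' Θ with Θ diagonal positive, Π of rank K, and P symmetric of rank K, the K-th largest singular value satisfies σ_K(Ω) ≥ θ_min² · σ_K(P) · λ_K(Π'Π), where θ_min is the smallest diagonal entry of Θ and λ_K(Π'Π) is the smallest eigenvalue of Π'Π. -/
set_option maxHeartbeats 1000000


open Matrix


lemma rayleigh_lower {m : Type*} [Fintype m] [DecidableEq m] {M : Matrix m m ℝ}
    (hM : M.IsHermitian) {c : ℝ} (hc : ∀ i, c ≤ hM.eigenvalues i) (v : m → ℝ) :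
    c * (v ⬝ᵥ v) ≤ v ⬝ᵥ (M *ᵥ v) := by
  classical
  set U : Matrix m m ℝ := (hM.eigenvectorUnitary : Matrix m m ℝ) with hU
  have hstar : star U = Uᵀ := by
    rw [Matrix.star_eq_conjTranspose, Matrix.conjTranspose_eq_transpose_of_trivial]
  have hUU : U * Uᵀ = 1 := by
    rw [← hstar]; exact (Unitary.mul_star_self_of_mem hM.eigenvectorUnitary.2)
  set W : m → ℝ := Uᵀ *ᵥ v with hW
  have hWvm : v ᵥ* U = W := by rw [hW, mulVec_transpose]
  have h1 : v ⬝ᵥ v = ∑ i, W i ^ 2 := by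
    have : W ⬝ᵥ W = v ⬝ᵥ v := by
      rw [hW]
      rw [dotProduct_mulVec, vecMul_transpose, mulVec_mulVec, hUU, one_mulVec]
    rw [← this, dotProduct]
    simp [pow_two]
  have hMspec : M = U * diagonal hM.eigenvalues * Uᵀ := by
    have h := hM.spectral_theorem
    rw [Unitary.conjStarAlgAut_apply, ← hU, hstar] at h
    exact h
  have h2 : v ⬝ᵥ (M *ᵥ v) = ∑ i, hM.eigenvalues i * W i ^ 2 := by
    have h2a : v ⬝ᵥ (M *ᵥ v) = v ⬝ᵥ ((U * diagonal hM.eigenvalues * Uᵀ) *ᵥ v) :=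
      congrArg (fun X => v ⬝ᵥ (X *ᵥ v)) hMspec
    rw [h2a, ← mulVec_mulVec, ← mulVec_mulVec, dotProduct_mulVec, hWvm]
    rw [dotProduct, ← hW]
    congr 1; ext i
    rw [mulVec_diagonal]
    ring
  rw [h1, h2, Finset.mul_sum]
  exact Finset.sum_le_sum fun i _ =>
    mul_le_mul_of_nonneg_right (hc i) (sq_nonneg _)

lemma dotProduct_self_nonneg {m : Type*} [Fintype m] (w : m → ℝ) : (0:ℝ) ≤ w ⬝ᵥ w :=
  Finset.sum_nonneg fun i _ => mul_self_nonneg (w i)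

lemma quad_lower_mul {m : Type*} [Fintype m] {M : Matrix m m ℝ} {γ : ℝ} (hγ : 0 ≤ γ)
    (hq : ∀ x, γ * (x ⬝ᵥ x) ≤ x ⬝ᵥ (M *ᵥ x)) (w : m → ℝ) :
    γ * (w ⬝ᵥ (M *ᵥ w)) ≤ (M *ᵥ w) ⬝ᵥ (M *ᵥ w) := by
  set q := w ⬝ᵥ (M *ᵥ w) with hq'
  have hs : (0:ℝ) ≤ w ⬝ᵥ w := dotProduct_self_nonneg w
  have ht : (0:ℝ) ≤ (M *ᵥ w) ⬝ᵥ (M *ᵥ w) := dotProduct_self_nonneg _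
  have hq0 : γ * (w ⬝ᵥ w) ≤ q := hq w
  have hqnn : 0 ≤ q := le_trans (mul_nonneg hγ hs) hq0
  have hCS : q ^ 2 ≤ (w ⬝ᵥ w) * ((M *ᵥ w) ⬝ᵥ (M *ᵥ w)) := by
    have := Finset.sum_mul_sq_le_sq_mul_sq Finset.univ w (M *ᵥ w)
    simpa [hq', dotProduct, pow_two] using this
  rcases eq_or_lt_of_le hs with h0 | hpos
  · have hq2 : q ^ 2 ≤ 0 := by rw [← h0, zero_mul] at hCS; exact hCS
    have : q = 0 := by nlinarith
    rw [this, mul_zero]; exact ht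
  · nlinarith [mul_le_mul_of_nonneg_right hq0 hqnn, hCS, hpos]

lemma sorted_getD_le {l : List ℝ} (hl : l.Pairwise (· ≤ ·)) {c : ℝ} {K : ℕ}
    (hK : 0 < K) (hKn : K ≤ l.length)
    (hcount : K ≤ (l.filter (fun x => decide (c ≤ x))).length) :
    c ≤ l.getD (l.length - K) 0 := by
  set m := l.length - K with hm
  have hmlt : m < l.length := by omega
  rw [List.getD_eq_getElem l 0 hmlt]
  by_contra hcon
  push_neg at hcon
  have htd := List.take_append_drop (m+1) l
  have hfilter_take : (l.take (m+1)).filter (fun x => decide (c ≤ x)) = [] := by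
    rw [List.filter_eq_nil_iff]
    intro a ha
    rw [List.mem_take_iff_getElem] at ha
    obtain ⟨i, hi, rfl⟩ := ha
    have hile : i ≤ m := by omega
    have hii : i < l.length := by omega
    have : l[i] ≤ l[m] := by
      have := hl.rel_get_of_le (a := ⟨i, hii⟩) (b := ⟨m, hmlt⟩) (by simpa using hile)
      simpa using this
    simpa using not_le.mpr (lt_of_le_of_lt this hcon)
  have : (l.filter (fun x => decide (c ≤ x))).length ≤ K - 1 := by
    conv_lhs => rw [← htd]
    rw [List.filter_append, hfilter_take, List.nil_append]
    calc ((l.drop (m+1)).filter _).length ≤ (l.drop (m+1)).length :=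
          List.length_filter_le _ _
      _ = l.length - (m+1) := List.length_drop
      _ ≤ K - 1 := by omega
  omega

lemma dot_gram {m k : Type*} [Fintype m] [Fintype k] (B : Matrix m k ℝ) (x : k → ℝ) :
    x ⬝ᵥ ((Bᵀ * B) *ᵥ x) = (B *ᵥ x) ⬝ᵥ (B *ᵥ x) := by
  rw [← mulVec_mulVec, dotProduct_mulVec, vecMul_transpose]

lemma isUnit_det_of_isHermitian_rank {k : ℕ} {M : Matrix (Fin k) (Fin k) ℝ}
    (hM : M.IsHermitian) (h : M.rank = k) : IsUnit M.det := by
  classical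
  have hcard := hM.rank_eq_card_non_zero_eigs
  have hall : ∀ i, hM.eigenvalues i ≠ 0 := by
    intro i
    by_contra hi
    have hlt := Fintype.card_subtype_lt (p := fun j => hM.eigenvalues j ≠ 0) (x := i)
      (by simpa using hi)
    rw [← hcard, h, Fintype.card_fin] at hlt
    omega
  rw [isUnit_iff_ne_zero, hM.det_eq_prod_eigenvalues]
  refine Finset.prod_ne_zero_iff.mpr fun i _ => ?_
  exact_mod_cast hall i

lemma sorted_head_le {l : List ℝ} (hl : l.Pairwise (· ≤ ·)) (hne : 0 < l.length)
    {x : ℝ} (hx : x ∈ l) : l.getD 0 0 ≤ x := by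
  rw [List.getD_eq_getElem l 0 hne]
  obtain ⟨k, hk, rfl⟩ := List.getElem_of_mem hx
  have := hl.rel_get_of_le (a := ⟨0, hne⟩) (b := ⟨k, hk⟩) (by simp [Fin.le_def])
  simpa using this


/-- The k-th largest singular value (1-indexed) of an n×n real matrix,
computed as the (n-k)-th entry of the ascending sorted list of square roots of
the eigenvalues of MᴴM. -/
noncomputable def kthLargestSingVal {n : ℕ} (M : Matrix (Fin n) (Fin n) ℝ) (k : ℕ) : ℝ :=
  (((Finset.univ : Finset (Fin n)).val.map fun i =>
      Real.sqrt ((Matrix.isHermitian_conjTranspose_mul_self M).eigenvalues i)).sort (· ≤ ·)).getD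
    (n - k) 0

/-- σ_K(Ω) ≥ θ_min² σ_K(P) λ_K(Pim'Pim) for Ω = ΘPimPPim'Θ. -/
theorem sigmaK_Omega_lower_bound {n K : ℕ} (hK : 0 < K) (hKn : K ≤ n)
    (θ : Fin n → ℝ) (hθ : ∀ i, 0 < θ i)
    (Pim : Matrix (Fin n) (Fin K) ℝ) (hPim : Pim.rank = K)
    (P : Matrix (Fin K) (Fin K) ℝ) (hPsymm : P.IsSymm) (hPrank : P.rank = K) :
    (Finset.univ.inf' ⟨⟨0, lt_of_lt_of_le hK hKn⟩, Finset.mem_univ _⟩ θ) ^ 2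
      * kthLargestSingVal P K
      * (Finset.univ.inf' ⟨⟨0, hK⟩, Finset.mem_univ _⟩
          (Matrix.isHermitian_conjTranspose_mul_self Pim).eigenvalues)
    ≤ kthLargestSingVal (Matrix.diagonal θ * Pim * P * Pimᵀ * Matrix.diagonal θ) K := by
  classical
  set D := Matrix.diagonal θ with hD
  set A := D * Pim with hAdef
  set Ω := D * Pim * P * Pimᵀ * D with hΩdef
  set θmin := (Finset.univ.inf' ⟨⟨0, lt_of_lt_of_le hK hKn⟩, Finset.mem_univ _⟩ θ) with hθmindef
  set lamPi := (Finset.univ.inf' ⟨⟨0, hK⟩, Finset.mem_univ _⟩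
      (Matrix.isHermitian_conjTranspose_mul_self Pim).eigenvalues) with hlamdef
  set σP := kthLargestSingVal P K with hσPdef
  -- basic facts about θmin
  have hθmin_pos : 0 < θmin := by
    obtain ⟨i, _, hi⟩ := Finset.exists_mem_eq_inf'
      (⟨⟨0, lt_of_lt_of_le hK hKn⟩, Finset.mem_univ _⟩ : (Finset.univ : Finset (Fin n)).Nonempty) θ
    rw [hθmindef, hi]; exact hθ i
  have hθmin_le : ∀ i, θmin ≤ θ i := fun i => Finset.inf'_le θ (Finset.mem_univ i)
  -- facts about lamPi
  have hPSPim : (Pimᵀ * Pim).PosSemidef := by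
    have := Matrix.posSemidef_conjTranspose_mul_self Pim
    rwa [conjTranspose_eq_transpose_of_trivial] at this
  have hlam_le : ∀ j, lamPi ≤ (Matrix.isHermitian_conjTranspose_mul_self Pim).eigenvalues j :=
    fun j => Finset.inf'_le _ (Finset.mem_univ j)
  have hlam_nonneg : 0 ≤ lamPi := by
    obtain ⟨j, _, hj⟩ := Finset.exists_mem_eq_inf'
      (⟨⟨0, hK⟩, Finset.mem_univ _⟩ : (Finset.univ : Finset (Fin K)).Nonempty)
      (Matrix.isHermitian_conjTranspose_mul_self Pim).eigenvalues
    rw [hlamdef, hj]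
    exact hPSPim.eigenvalues_nonneg j
  -- facts about σP
  have hPSP : (Pᵀ * P).PosSemidef := by
    have := Matrix.posSemidef_conjTranspose_mul_self P
    rwa [conjTranspose_eq_transpose_of_trivial] at this
  set lP := ((Finset.univ : Finset (Fin K)).val.map fun i =>
      Real.sqrt ((Matrix.isHermitian_conjTranspose_mul_self P).eigenvalues i)).sort (· ≤ ·) with hlPdef
  have hlPlen : lP.length = K := by
    rw [hlPdef, Multiset.length_sort, Multiset.card_map]
    simp
  have hlPsorted : lP.Pairwise (· ≤ ·) := Multiset.pairwise_sort _ _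
  have hσP_eq : σP = lP.getD 0 0 := by
    rw [hσPdef, kthLargestSingVal, Nat.sub_self, hlPdef]
  have hσP_nonneg : 0 ≤ σP := by
    have hmem : lP.getD 0 0 ∈ lP := by
      rw [List.getD_eq_getElem lP 0 (by omega)]
      exact List.getElem_mem _
    rw [hlPdef, Multiset.mem_sort, Multiset.mem_map] at hmem
    obtain ⟨j, _, hj⟩ := hmem
    rw [hσP_eq, ← hj]
    exact Real.sqrt_nonneg _
  have hσP_le : ∀ j, σP ^ 2 ≤ (Matrix.isHermitian_conjTranspose_mul_self P).eigenvalues j := by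
    intro j
    have hmem : Real.sqrt ((Matrix.isHermitian_conjTranspose_mul_self P).eigenvalues j) ∈ lP := by
      rw [hlPdef, Multiset.mem_sort]
      exact Multiset.mem_map_of_mem _ (by simp)
    have h1 : σP ≤ Real.sqrt ((Matrix.isHermitian_conjTranspose_mul_self P).eigenvalues j) := by
      rw [hσP_eq]
      exact sorted_head_le hlPsorted (by omega) hmem
    calc σP ^ 2 ≤ Real.sqrt ((Matrix.isHermitian_conjTranspose_mul_self P).eigenvalues j) ^ 2 :=
          pow_le_pow_left₀ hσP_nonneg h1 2
      _ = _ := Real.sq_sqrt (hPSP.eigenvalues_nonneg j)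
  have hF2 : ∀ x : Fin K → ℝ, σP ^ 2 * (x ⬝ᵥ x) ≤ x ⬝ᵥ ((Pᵀ * P) *ᵥ x) :=
    fun x => rayleigh_lower (Matrix.isHermitian_conjTranspose_mul_self P) hσP_le x
  -- the key quadratic form bound for A
  set c₀ := θmin ^ 2 * lamPi with hc₀def
  have hc₀_nonneg : 0 ≤ c₀ := mul_nonneg (sq_nonneg _) hlam_nonneg
  have hF1 : ∀ x : Fin K → ℝ, c₀ * (x ⬝ᵥ x) ≤ x ⬝ᵥ ((Aᵀ * A) *ᵥ x) := by
    intro x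
    rw [dot_gram]
    have hAx : A *ᵥ x = fun i => θ i * (Pim *ᵥ x) i := by
      rw [hAdef, ← mulVec_mulVec, hD]
      ext i
      rw [mulVec_diagonal]
    have step1 : θmin ^ 2 * (lamPi * (x ⬝ᵥ x)) ≤ θmin ^ 2 * (x ⬝ᵥ ((Pimᵀ * Pim) *ᵥ x)) :=
      mul_le_mul_of_nonneg_left
        (rayleigh_lower (Matrix.isHermitian_conjTranspose_mul_self Pim) hlam_le x) (sq_nonneg _)
    have step2 : θmin ^ 2 * ((Pim *ᵥ x) ⬝ᵥ (Pim *ᵥ x)) ≤ (A *ᵥ x) ⬝ᵥ (A *ᵥ x) := by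
      rw [hAx, dotProduct, dotProduct, Finset.mul_sum]
      apply Finset.sum_le_sum
      intro i _
      have h1 : θmin ≤ θ i := hθmin_le i
      have h2 : θmin ^ 2 ≤ θ i ^ 2 := by nlinarith
      nlinarith [mul_le_mul_of_nonneg_right h2 (mul_self_nonneg ((Pim *ᵥ x) i))]
    rw [dot_gram] at step1
    calc c₀ * (x ⬝ᵥ x) = θmin ^ 2 * (lamPi * (x ⬝ᵥ x)) := by ring
      _ ≤ θmin ^ 2 * ((Pim *ᵥ x) ⬝ᵥ (Pim *ᵥ x)) := step1
      _ ≤ (A *ᵥ x) ⬝ᵥ (A *ᵥ x) := step2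
  -- rank computations
  have hDdet : IsUnit D.det := by
    rw [hD, det_diagonal, isUnit_iff_ne_zero]
    exact Finset.prod_ne_zero_iff.mpr fun i _ => (hθ i).ne'
  have hGramRank : (Pimᵀ * Pim).rank = K := by
    rw [rank_transpose_mul_self, hPim]
  have hGdet : IsUnit (Pimᵀ * Pim).det :=
    isUnit_det_of_isHermitian_rank (Matrix.isHermitian_conjTranspose_mul_self Pim) hGramRank
  have hPh : P.IsHermitian := by
    rw [Matrix.IsHermitian, conjTranspose_eq_transpose_of_trivial]
    exact hPsymm
  have hPdet : IsUnit P.det := isUnit_det_of_isHermitian_rank hPh hPrank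
  have hrankcore : (Pim * P * Pimᵀ).rank = K := by
    apply le_antisymm
    · calc (Pim * P * Pimᵀ).rank ≤ (Pim * P).rank := rank_mul_le_left _ _
        _ ≤ Pim.rank := rank_mul_le_left _ _
        _ = K := hPim
    · have h1 : Pimᵀ * (Pim * P * Pimᵀ) * Pim = Pimᵀ * Pim * P * (Pimᵀ * Pim) := by
        simp only [Matrix.mul_assoc]
      have h2 : (Pimᵀ * Pim * P * (Pimᵀ * Pim)).rank = K := by
        rw [rank_mul_eq_left_of_isUnit_det _ _ hGdet,
          rank_mul_eq_right_of_isUnit_det _ _ hGdet, hPrank]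
      calc K = (Pimᵀ * Pim * P * (Pimᵀ * Pim)).rank := h2.symm
        _ = (Pimᵀ * (Pim * P * Pimᵀ) * Pim).rank := by rw [h1]
        _ ≤ (Pimᵀ * (Pim * P * Pimᵀ)).rank := rank_mul_le_left _ _
        _ ≤ (Pim * P * Pimᵀ).rank := rank_mul_le_right _ _
  have hΩrank : Ω.rank = K := by
    have hfac : Ω = D * (Pim * P * Pimᵀ) * D := by
      rw [hΩdef]; simp only [Matrix.mul_assoc]
    rw [hfac, rank_mul_eq_left_of_isUnit_det _ _ hDdet,
      rank_mul_eq_right_of_isUnit_det _ _ hDdet, hrankcore]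
  -- the Hermitian matrix of singular values of Ω
  have hH := Matrix.isHermitian_conjTranspose_mul_self Ω
  have hHrank : (Ωᵀ * Ω).rank = K := by rw [rank_transpose_mul_self, hΩrank]
  -- symmetry of Ω
  have hΩT : Ωᵀ = Ω := by
    rw [hΩdef, hD]
    simp only [Matrix.transpose_mul, Matrix.diagonal_transpose, Matrix.transpose_transpose,
      hPsymm.eq, Matrix.mul_assoc]
  have hΩfactor : ∀ y : Fin n → ℝ, A *ᵥ (P *ᵥ (Aᵀ *ᵥ y)) = Ω *ᵥ y := by
    intro y
    have hAT : Aᵀ = Pimᵀ * D := by rw [hAdef, Matrix.transpose_mul, hD, diagonal_transpose]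
    rw [mulVec_mulVec, mulVec_mulVec, hAT, hAdef, hΩdef]
    simp only [Matrix.mul_assoc]
  -- eigenvalue lower bound
  have hEig : ∀ i : Fin n, hH.eigenvalues i ≠ 0 →
      c₀ * σP ≤ Real.sqrt (hH.eigenvalues i) := by
    intro i hine
    set μ := hH.eigenvalues i with hμdef
    set v : Fin n → ℝ := ⇑(hH.eigenvectorBasis i) with hvdef
    have hv : (Ωᵀ * Ω) *ᵥ v = μ • v := hH.mulVec_eigenvectorBasis i
    have hvne : v ⬝ᵥ v ≠ 0 := by
      intro h0
      have hb : hH.eigenvectorBasis i ≠ 0 := by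
        have h1 := hH.eigenvectorBasis.orthonormal.1 i
        intro hcon
        rw [hcon] at h1
        simp at h1
      apply hb
      have : ∀ j, v j = 0 := by
        intro j
        have hnn : ∀ j, 0 ≤ v j * v j := fun j => mul_self_nonneg _
        have := (Finset.sum_eq_zero_iff_of_nonneg (fun j _ => hnn j)).mp h0 j (Finset.mem_univ j)
        nlinarith [this]
      ext j
      exact this j
    have hvv_pos : 0 < v ⬝ᵥ v :=
      lt_of_le_of_ne (dotProduct_self_nonneg v) (Ne.symm hvne)
    have hquad : v ⬝ᵥ ((Ωᵀ * Ω) *ᵥ v) = μ * (v ⬝ᵥ v) := by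
      rw [hv, dotProduct_smul, smul_eq_mul]
    have hquad' : μ * (v ⬝ᵥ v) = (Ω *ᵥ v) ⬝ᵥ (Ω *ᵥ v) := by
      rw [← hquad, dot_gram]
    have hμpos : 0 < μ := by
      rcases lt_trichotomy μ 0 with h | h | h
      · exfalso
        have := dotProduct_self_nonneg (Ω *ᵥ v)
        nlinarith
      · exact absurd h hine
      · exact h
    set w : Fin K → ℝ := μ⁻¹ • (P *ᵥ (Aᵀ *ᵥ (Ω *ᵥ v))) with hwdef
    have hAw : A *ᵥ w = v := by
      rw [hwdef, mulVec_smul, hΩfactor, mulVec_mulVec,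
        show Ω * Ω = Ωᵀ * Ω by rw [hΩT], hv, smul_smul, inv_mul_cancel₀ hine, one_smul]
    obtain ⟨M, hMdef⟩ : ∃ M, M = Aᵀ * A := ⟨_, rfl⟩
    obtain ⟨y, hydef⟩ : ∃ y, y = M *ᵥ w := ⟨_, rfl⟩
    obtain ⟨x, hxdef⟩ : ∃ x, x = P *ᵥ y := ⟨_, rfl⟩
    have h6 : Aᵀ *ᵥ (A *ᵥ w) = M *ᵥ w := by rw [mulVec_mulVec, ← hMdef]
    have hΩv : Ω *ᵥ v = A *ᵥ x := by
      rw [hxdef, hydef, ← h6, hΩfactor (A *ᵥ w), hAw]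
    have e1 : μ * (v ⬝ᵥ v) = x ⬝ᵥ (M *ᵥ x) := by rw [hquad', hΩv, hMdef, dot_gram]
    have i1 : c₀ * (x ⬝ᵥ x) ≤ x ⬝ᵥ (M *ᵥ x) := by rw [hMdef]; exact hF1 x
    have e2 : x ⬝ᵥ x = y ⬝ᵥ ((Pᵀ * P) *ᵥ y) := by rw [hxdef, dot_gram]
    have i2 : σP ^ 2 * (y ⬝ᵥ y) ≤ y ⬝ᵥ ((Pᵀ * P) *ᵥ y) := hF2 y
    have i3 : c₀ * (w ⬝ᵥ (M *ᵥ w)) ≤ y ⬝ᵥ y := by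
      rw [hydef, hMdef]; exact quad_lower_mul hc₀_nonneg hF1 w
    have e3 : w ⬝ᵥ (M *ᵥ w) = v ⬝ᵥ v := by rw [hMdef, dot_gram, hAw]
    have key : c₀ ^ 2 * σP ^ 2 ≤ μ := by
      have h5 : c₀ * (σP ^ 2 * (c₀ * (v ⬝ᵥ v))) ≤ μ * (v ⬝ᵥ v) := by
        rw [e1]
        calc c₀ * (σP ^ 2 * (c₀ * (v ⬝ᵥ v)))
            ≤ c₀ * (σP ^ 2 * (y ⬝ᵥ y)) := by
              apply mul_le_mul_of_nonneg_left _ hc₀_nonneg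
              apply mul_le_mul_of_nonneg_left _ (sq_nonneg σP)
              rw [← e3]; exact i3
          _ ≤ c₀ * (x ⬝ᵥ x) := by
              apply mul_le_mul_of_nonneg_left _ hc₀_nonneg
              rw [e2]; exact i2
          _ ≤ x ⬝ᵥ (M *ᵥ x) := i1
      nlinarith [hvv_pos]
    calc c₀ * σP ≤ Real.sqrt ((c₀ * σP) ^ 2) := by
          rw [Real.sqrt_sq (mul_nonneg hc₀_nonneg hσP_nonneg)]
      _ ≤ Real.sqrt μ := Real.sqrt_le_sqrt (by nlinarith [key])
  -- counting and conclusion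
  have hcard : (Finset.univ.filter fun j => hH.eigenvalues j ≠ 0).card = K := by
    have h1 := hH.rank_eq_card_non_zero_eigs
    rw [Fintype.card_subtype] at h1
    have h2 : (Ωᴴ * Ω).rank = K := by
      rw [conjTranspose_eq_transpose_of_trivial]; exact hHrank
    rw [h2] at h1
    exact h1.symm
  have hc_eq : θmin ^ 2 * σP * lamPi = c₀ * σP := by rw [hc₀def]; ring
  rw [hc_eq]
  set L := (((Finset.univ : Finset (Fin n)).val.map fun j =>
      Real.sqrt (hH.eigenvalues j)).sort (· ≤ ·)) with hLdef
  have hLlen : L.length = n := by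
    rw [hLdef, Multiset.length_sort, Multiset.card_map]
    simp
  have hgoal_eq : kthLargestSingVal Ω K = L.getD (n - K) 0 := rfl
  rw [hgoal_eq]
  have hsub : (Finset.univ.filter fun j => hH.eigenvalues j ≠ 0) ⊆
      (Finset.univ.filter fun j => c₀ * σP ≤ Real.sqrt (hH.eigenvalues j)) := by
    intro j hj
    simp only [Finset.mem_filter, Finset.mem_univ, true_and] at hj ⊢
    exact hEig j hj
  have hcount : K ≤ (L.filter fun z => decide (c₀ * σP ≤ z)).length := by
    have h1 : ((L.filter fun z => decide (c₀ * σP ≤ z)) : Multiset ℝ)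
        = Multiset.filter (fun z => c₀ * σP ≤ z)
            ((Finset.univ : Finset (Fin n)).val.map fun j => Real.sqrt (hH.eigenvalues j)) := by
      rw [hLdef, ← Multiset.filter_coe, Multiset.sort_eq]
    have h2 : (L.filter fun z => decide (c₀ * σP ≤ z)).length
        = (Finset.univ.filter fun j => c₀ * σP ≤ Real.sqrt (hH.eigenvalues j)).card := by
      rw [← Multiset.coe_card, h1, ← Multiset.countP_eq_card_filter, Multiset.countP_map,
        Finset.card_def, Finset.filter_val]
    rw [h2, ← hcard]
    exact Finset.card_le_card hsub
  have hfin := sorted_getD_le (Multiset.pairwise_sort _ _) hK (by rw [hLlen]; exact hKn) hcount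
  rw [hLlen] at hfin
  exact hfin
end

section
/- Let Ω = UΛU' be the rank-K eigendecomposition of Ω = ΘΠPΠ'Θ with U'U = I_K. Then for each row i, U(i,:) = θ(i)·Π(i,:)·B for some fixed K×K invertible matrix B (namely B = PΠ'ΘUΛ^{−1}); in particular, each row of U is a positive multiple of a convex-combination image: rows of U corresponding to nodes with the same membership vector Π(i,:) are positive scalar multiples of each other. -/
open Matrix

/-- For Ω = ΘΠPΠ'Θ = UΛU' with U'U = I_K and Λ diagonal invertible, each row
U(i,:) equals θ(i)·Π(i,:)·B with B = PΠ'ΘUΛ⁻¹ invertible; consequently rows of U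
corresponding to equal membership rows of Π are positive scalar multiples of
each other. -/
theorem rows_of_U_structure {n K : ℕ} (hK : 0 < K) (hKn : K ≤ n)
    (θ : Fin n → ℝ) (hθ : ∀ i, 0 < θ i)
    (Pim : Matrix (Fin n) (Fin K) ℝ) (hPimrank : Pim.rank = K)
    (hPimnn : ∀ i k, 0 ≤ Pim i k) (hPimrow : ∀ i, ∑ k, Pim i k = 1)
    (P : Matrix (Fin K) (Fin K) ℝ) (hPsymm : P.IsSymm) (hPrank : P.rank = K)
    (U : Matrix (Fin n) (Fin K) ℝ) (lam : Fin K → ℝ) (hlam : ∀ k, lam k ≠ 0)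
    (hU : Uᵀ * U = 1)
    (hΩ : Matrix.diagonal θ * Pim * P * Pimᵀ * Matrix.diagonal θ
        = U * Matrix.diagonal lam * Uᵀ) :
    IsUnit (P * Pimᵀ * Matrix.diagonal θ * U * (Matrix.diagonal lam)⁻¹) ∧
    U = Matrix.diagonal θ * Pim
        * (P * Pimᵀ * Matrix.diagonal θ * U * (Matrix.diagonal lam)⁻¹) ∧
    ∀ i j : Fin n, Pim i = Pim j → ∃ c : ℝ, 0 < c ∧ ∀ k, U i k = c * U j k := by
  set D := Matrix.diagonal θ with hD
  set L := Matrix.diagonal lam with hL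
  set B := P * Pimᵀ * D * U * L⁻¹ with hB
  have hdet : IsUnit L.det := by
    simp only [hL, Matrix.det_diagonal, isUnit_iff_ne_zero, Finset.prod_ne_zero_iff]
    exact fun k _ => hlam k
  have hLinv : L * L⁻¹ = 1 := Matrix.mul_nonsing_inv _ hdet
  have hEq : U = D * Pim * B := by
    have h1 : D * Pim * B = (D * Pim * P * Pimᵀ * D) * U * L⁻¹ := by
      simp only [hB, Matrix.mul_assoc]
    have h2 : U * L * Uᵀ * U * L⁻¹ = U := by
      calc U * L * Uᵀ * U * L⁻¹ = U * (L * (Uᵀ * U) * L⁻¹) := by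
            simp only [Matrix.mul_assoc]
        _ = U := by rw [hU, Matrix.mul_one, hLinv, Matrix.mul_one]
    rw [h1, hΩ, h2]
  have hleft : (Uᵀ * (D * Pim)) * B = 1 := by
    rw [Matrix.mul_assoc, ← hEq, hU]
  have hunit : IsUnit B := (Matrix.isUnit_iff_isUnit_det B).mpr (Matrix.isUnit_det_of_left_inverse hleft)
  refine ⟨hunit, hEq, fun i j hij => ?_⟩
  refine ⟨θ i / θ j, div_pos (hθ i) (hθ j), fun k => ?_⟩
  have hrow : ∀ m : Fin n, U m k = θ m * (Pim * B) m k := by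
    intro m
    conv_lhs => rw [hEq]
    rw [Matrix.mul_assoc, hD, Matrix.diagonal_mul]
  have hPB : (Pim * B) i k = (Pim * B) j k := by
    simp only [Matrix.mul_apply, hij]
  rw [hrow i, hrow j, hPB]
  rw [div_mul_eq_mul_div, mul_comm (θ j), ← mul_assoc, mul_div_assoc, div_self (hθ j).ne', mul_one]
end

section
/- With U the n×K matrix of orthonormal eigenvectors of Ω = ΘΠPΠ'Θ (rank K), the squared row norms satisfy θ_min²/(θ_max² K λ_1(Π'Π)) ≤ max_i ‖U(i,:)‖² ≤ θ_max²/(θ_min² λ_K(Π'Π)). -/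
open Matrix

-- quadratic form lower bound for real symmetric matrices
lemma quad_lower {K : ℕ} (A : Matrix (Fin K) (Fin K) ℝ) (hA : A.IsHermitian) (c : ℝ)
    (hc : ∀ k, c ≤ hA.eigenvalues k) (x : Fin K → ℝ) :
    c * (x ⬝ᵥ x) ≤ x ⬝ᵥ A *ᵥ x := by
  set V : Matrix (Fin K) (Fin K) ℝ := (hA.eigenvectorUnitary : Matrix (Fin K) (Fin K) ℝ) with hV
  set y : Fin K → ℝ := x ᵥ* V with hy
  have hVV : V * star V = 1 := (Matrix.mem_unitaryGroup_iff).mp (hA.eigenvectorUnitary).2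
  have hstar : star V = Vᵀ := by
    ext i j; simp [Matrix.star_apply]
  have h1 : (star V) *ᵥ x = y := by rw [hstar, mulVec_transpose, hy]
  have hyy : y ⬝ᵥ y = x ⬝ᵥ x := by
    calc y ⬝ᵥ y = x ⬝ᵥ (V *ᵥ ((star V) *ᵥ x)) := by
          rw [dotProduct_mulVec, ← hy, h1]
      _ = x ⬝ᵥ ((V * star V) *ᵥ x) := by rw [mulVec_mulVec]
      _ = x ⬝ᵥ x := by rw [hVV, one_mulVec]
  have hAx : x ⬝ᵥ A *ᵥ x = ∑ k, hA.eigenvalues k * (y k * y k) := by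
    conv_lhs => rw [hA.spectral_theorem, Unitary.conjStarAlgAut_apply]
    rw [← mulVec_mulVec, ← mulVec_mulVec, dotProduct_mulVec]
    rw [h1]
    show y ⬝ᵥ (diagonal (RCLike.ofReal ∘ hA.eigenvalues) *ᵥ y) = _
    simp [mulVec_diagonal, dotProduct, Function.comp]
    exact Finset.sum_congr rfl fun k _ => by ring
  rw [hAx, ← hyy]
  rw [dotProduct, Finset.mul_sum]
  refine Finset.sum_le_sum fun k _ => ?_
  have := mul_self_nonneg (y k)
  exact mul_le_mul_of_nonneg_right (hc k) this

lemma eig_sum_trace {K : ℕ} (A : Matrix (Fin K) (Fin K) ℝ) (hA : A.IsHermitian) :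
    ∑ k, hA.eigenvalues k = A.trace := by
  set V : Matrix (Fin K) (Fin K) ℝ := (hA.eigenvectorUnitary : Matrix (Fin K) (Fin K) ℝ) with hV
  have hVV : star V * V = 1 := (Matrix.mem_unitaryGroup_iff').mp (hA.eigenvectorUnitary).2
  conv_rhs => rw [hA.spectral_theorem, Unitary.conjStarAlgAut_apply]
  rw [Matrix.trace_mul_cycle, hVV, Matrix.one_mul, Matrix.trace_diagonal]
  simp [Function.comp]


/-- Bounds on the maximum squared row norm of the orthonormal eigenvector matrix
U of Ω = ΘΠPΠ'Θ:
θ_min²/(θ_max² K λ₁(Π'Π)) ≤ max_i ‖U(i,:)‖² ≤ θ_max²/(θ_min² λ_K(Π'Π)). -/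
theorem row_norm_bounds {n K : ℕ} (hK : 0 < K) (hKn : K ≤ n)
    (θ : Fin n → ℝ) (hθ : ∀ i, 0 < θ i)
    (Pim : Matrix (Fin n) (Fin K) ℝ) (hPimrank : Pim.rank = K)
    (hPimnn : ∀ i k, 0 ≤ Pim i k) (hPimrow : ∀ i, ∑ k, Pim i k = 1)
    (P : Matrix (Fin K) (Fin K) ℝ) (hPsymm : P.IsSymm) (hPrank : P.rank = K)
    (U : Matrix (Fin n) (Fin K) ℝ) (lam : Fin K → ℝ) (hlam : ∀ k, lam k ≠ 0)
    (hU : Uᵀ * U = 1)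
    (hΩ : Matrix.diagonal θ * Pim * P * Pimᵀ * Matrix.diagonal θ
        = U * Matrix.diagonal lam * Uᵀ)
    (θmin θmax lam1 lamK : ℝ)
    (hθmin : θmin = Finset.univ.inf' ⟨⟨0, lt_of_lt_of_le hK hKn⟩, Finset.mem_univ _⟩ θ)
    (hθmax : θmax = Finset.univ.sup' ⟨⟨0, lt_of_lt_of_le hK hKn⟩, Finset.mem_univ _⟩ θ)
    (hlam1 : lam1 = Finset.univ.sup' ⟨⟨0, hK⟩, Finset.mem_univ _⟩
        (Matrix.isHermitian_conjTranspose_mul_self Pim : (Pimᵀ * Pim).IsHermitian).eigenvalues)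
    (hlamK : lamK = Finset.univ.inf' ⟨⟨0, hK⟩, Finset.mem_univ _⟩
        (Matrix.isHermitian_conjTranspose_mul_self Pim : (Pimᵀ * Pim).IsHermitian).eigenvalues) :
    θmin ^ 2 / (θmax ^ 2 * K * lam1)
      ≤ Finset.univ.sup' ⟨⟨0, lt_of_lt_of_le hK hKn⟩, Finset.mem_univ _⟩
          (fun i => ∑ k, U i k ^ 2) ∧
    Finset.univ.sup' ⟨⟨0, lt_of_lt_of_le hK hKn⟩, Finset.mem_univ _⟩
          (fun i => ∑ k, U i k ^ 2)
      ≤ θmax ^ 2 / (θmin ^ 2 * lamK) := by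
  constructor
  ·
    have hn : 0 < n := lt_of_lt_of_le hK hKn
    have hμ := (Matrix.isHermitian_conjTranspose_mul_self Pim : (Pimᵀ * Pim).IsHermitian)
    set μ := hμ.eigenvalues with hμdef
    set S := Finset.univ.sup' ⟨⟨0, hn⟩, Finset.mem_univ _⟩ (fun i => ∑ k, U i k ^ 2) with hS
    -- θmin ≤ θmax, both positive
    have hθminpos : 0 < θmin := by
      rw [hθmin]; exact (Finset.lt_inf'_iff _).2 fun i _ => hθ i
    have hθmm : θmin ≤ θmax := by
      rw [hθmin, hθmax]
      exact le_trans (Finset.inf'_le θ (Finset.mem_univ ⟨0, hn⟩))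
        (Finset.le_sup' θ (Finset.mem_univ ⟨0, hn⟩))
    -- trace of ΠᵀΠ ≥ n / K
    have htrace : (n : ℝ) / K ≤ (Pimᵀ * Pim).trace := by
      rw [Matrix.trace]
      have h1 : ∀ i, (1 : ℝ) / K ≤ ∑ k, Pim i k ^ 2 := by
        intro i
        have := sq_sum_le_card_mul_sum_sq (s := Finset.univ) (f := fun k => Pim i k)
        rw [hPimrow i, one_pow, Finset.card_univ, Fintype.card_fin] at this
        rw [div_le_iff₀ (by positivity)]
        rw [mul_comm]
        exact_mod_cast this
      have h2 : ∑ i, (1 : ℝ) / K ≤ ∑ i, ∑ k, Pim i k ^ 2 := Finset.sum_le_sum fun i _ => h1 i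
      simp only [Finset.sum_const, Finset.card_univ, Fintype.card_fin, nsmul_eq_mul] at h2
      calc (n : ℝ) / K = n * (1 / K) := by ring
        _ ≤ ∑ i, ∑ k, Pim i k ^ 2 := h2
        _ = ∑ k, (Pimᵀ * Pim).diag k := by
            rw [Finset.sum_comm]
            refine Finset.sum_congr rfl fun k _ => ?_
            simp [Matrix.diag, Matrix.mul_apply, sq]
    have hct : Pimᴴ = Pimᵀ := by ext i j; simp [Matrix.conjTranspose_apply]
    -- trace = ∑ μ ≤ K * lam1
    have htr2 : (Pimᵀ * Pim).trace ≤ K * lam1 := by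
      rw [← hct, ← eig_sum_trace _ hμ, hlam1]
      calc ∑ k, μ k ≤ ∑ _k : Fin K, Finset.univ.sup' ⟨⟨0, hK⟩, Finset.mem_univ _⟩ μ :=
            Finset.sum_le_sum fun k _ => Finset.le_sup' μ (Finset.mem_univ k)
        _ = K * _ := by simp [Finset.sum_const, nsmul_eq_mul]
    have hnK : (n : ℝ) ≤ K ^ 2 * lam1 := by
      have := le_trans htrace htr2
      rw [div_le_iff₀ (by positivity)] at this
      calc (n:ℝ) ≤ K * lam1 * K := this
        _ = K ^ 2 * lam1 := by ring
    have hlam1pos : 0 < lam1 := by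
      nlinarith [(Nat.cast_pos (α := ℝ)).mpr hn, sq_nonneg (K:ℝ)]
    -- ∑ over all i of row sums = K
    have hsum : ∑ i, ∑ k, U i k ^ 2 = K := by
      have h1 : (Uᵀ * U).trace = (1 : Matrix (Fin K) (Fin K) ℝ).trace := by rw [hU]
      rw [Matrix.trace_one] at h1
      calc ∑ i, ∑ k, U i k ^ 2 = ∑ k, ∑ i, U i k ^ 2 := Finset.sum_comm
        _ = (Uᵀ * U).trace := by
            rw [Matrix.trace]
            refine Finset.sum_congr rfl fun k _ => ?_
            simp [Matrix.diag, Matrix.mul_apply, sq]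
        _ = K := by rw [h1]; simp
    -- K / n ≤ S
    have hKnS : (K : ℝ) / n ≤ S := by
      rw [div_le_iff₀ (by positivity)]
      have : ∑ i, ∑ k, U i k ^ 2 ≤ ∑ _i : Fin n, S :=
        Finset.sum_le_sum fun i _ => Finset.le_sup' (fun i => ∑ k, U i k ^ 2) (Finset.mem_univ i)
      rw [hsum] at this
      simpa [Finset.sum_const, nsmul_eq_mul, mul_comm] using this
    have hθmaxpos : 0 < θmax := lt_of_lt_of_le hθminpos hθmm
    refine le_trans ?_ hKnS
    rw [div_le_div_iff₀ (by positivity) (by positivity)]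
    have h1 : θmin ^ 2 * n ≤ θmax ^ 2 * (K ^ 2 * lam1) := by
      have := mul_le_mul (pow_le_pow_left₀ hθminpos.le hθmm 2) hnK (by positivity) (by positivity)
      exact this
    nlinarith [h1]
  ·
    have hn : 0 < n := lt_of_lt_of_le hK hKn
    have hμ := (Matrix.isHermitian_conjTranspose_mul_self Pim : (Pimᵀ * Pim).IsHermitian)
    set μ := hμ.eigenvalues with hμdef
    have hθminpos : 0 < θmin := by
      rw [hθmin]; exact (Finset.lt_inf'_iff _).2 fun i _ => hθ i
    have hθil : ∀ i, θmin ≤ θ i := fun i => hθmin ▸ Finset.inf'_le θ (Finset.mem_univ i)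
    have hθiu : ∀ i, θ i ≤ θmax := fun i => hθmax ▸ Finset.le_sup' θ (Finset.mem_univ i)
    -- all eigenvalues of ΠᵀΠ are positive
    have hμnn : ∀ k, 0 ≤ μ k := fun k =>
      (Matrix.posSemidef_conjTranspose_mul_self Pim).eigenvalues_nonneg k
    have hμpos : ∀ k, 0 < μ k := by
      intro k
      rcases lt_or_eq_of_le (hμnn k) with h | h
      · exact h
      · exfalso
        have hrank : (Pimᴴ * Pim).rank = K := by
          have hct : Pimᴴ = Pimᵀ := by ext i j; simp [Matrix.conjTranspose_apply]
          rw [hct, Matrix.rank_transpose_mul_self, hPimrank]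
        rw [hμ.rank_eq_card_non_zero_eigs] at hrank
        have hlt : Fintype.card {i // μ i ≠ 0} < Fintype.card (Fin K) :=
          Fintype.card_subtype_lt (x := k) (by simp [← h])
        rw [hrank, Fintype.card_fin] at hlt
        exact lt_irrefl _ hlt
    have hlamKeq : ∃ k, lamK = μ k := by
      obtain ⟨k, _, hk⟩ := Finset.exists_mem_eq_inf' ⟨⟨0, hK⟩, Finset.mem_univ _⟩ μ
      exact ⟨k, by rw [hlamK, hk]⟩
    have hlamKpos : 0 < lamK := by obtain ⟨k, hk⟩ := hlamKeq; rw [hk]; exact hμpos k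
    have hlamKle : ∀ k, lamK ≤ μ k := fun k => hlamK ▸ Finset.inf'_le μ (Finset.mem_univ k)
    set c : ℝ := θmin ^ 2 * lamK with hc
    have hcpos : 0 < c := by positivity
    -- construct B with U = diagonal θ * Pim * B
    set Dinv : Matrix (Fin K) (Fin K) ℝ := Matrix.diagonal (fun k => (lam k)⁻¹) with hDinv
    have hDD : Matrix.diagonal lam * Dinv = 1 := by
      rw [hDinv, Matrix.diagonal_mul_diagonal]
      have he : (fun i => lam i * (lam i)⁻¹) = fun _ => (1 : ℝ) :=
        funext fun k => mul_inv_cancel₀ (hlam k)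
      rw [he, Matrix.diagonal_one]
    set B : Matrix (Fin K) (Fin K) ℝ := P * Pimᵀ * Matrix.diagonal θ * U * Dinv with hB
    have hUB : Matrix.diagonal θ * Pim * B = U := by
      have h1 : Matrix.diagonal θ * Pim * B
          = Matrix.diagonal θ * Pim * P * Pimᵀ * Matrix.diagonal θ * U * Dinv := by
        simp only [hB, Matrix.mul_assoc]
      rw [h1, hΩ]
      calc U * Matrix.diagonal lam * Uᵀ * U * Dinv
          = U * Matrix.diagonal lam * (Uᵀ * U) * Dinv := by simp only [Matrix.mul_assoc]
        _ = U * (Matrix.diagonal lam * Dinv) := by rw [hU, Matrix.mul_one, Matrix.mul_assoc]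
        _ = U := by rw [hDD, Matrix.mul_one]
    -- Bᵀ * M * B = 1 where M = (ΘΠ)ᵀ(ΘΠ)
    set T : Matrix (Fin n) (Fin K) ℝ := Matrix.diagonal θ * Pim with hT
    set M : Matrix (Fin K) (Fin K) ℝ := Tᵀ * T with hM
    have hBMB : Bᵀ * M * B = 1 := by
      have : (T * B)ᵀ * (T * B) = 1 := by rw [hUB]; exact hU
      rw [Matrix.transpose_mul] at this
      rw [hM, ← this]
      simp only [Matrix.mul_assoc]
    -- quadratic form lower bound : c * ‖y‖² ≤ y M y
    have hquad : ∀ y : Fin K → ℝ, c * (y ⬝ᵥ y) ≤ y ⬝ᵥ M *ᵥ y := by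
      intro y
      have h1 : y ⬝ᵥ M *ᵥ y = (T *ᵥ y) ⬝ᵥ (T *ᵥ y) := by
        rw [hM, ← Matrix.mulVec_mulVec, dotProduct_mulVec, Matrix.vecMul_transpose]
      have h2 : (T *ᵥ y) ⬝ᵥ (T *ᵥ y) = ∑ i, θ i ^ 2 * ((Pim *ᵥ y) i) ^ 2 := by
        rw [hT, dotProduct]
        refine Finset.sum_congr rfl fun i _ => ?_
        rw [← Matrix.mulVec_mulVec]
        simp [Matrix.mulVec_diagonal]
        ring
      have h3 : θmin ^ 2 * ((Pim *ᵥ y) ⬝ᵥ (Pim *ᵥ y)) ≤ ∑ i, θ i ^ 2 * ((Pim *ᵥ y) i) ^ 2 := by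
        rw [dotProduct, Finset.mul_sum]
        refine Finset.sum_le_sum fun i _ => ?_
        rw [← sq]
        refine mul_le_mul_of_nonneg_right ?_ (sq_nonneg _)
        exact pow_le_pow_left₀ hθminpos.le (hθil i) 2
      have h4 : (Pim *ᵥ y) ⬝ᵥ (Pim *ᵥ y) = y ⬝ᵥ (Pimᴴ * Pim) *ᵥ y := by
        have hct : Pimᴴ = Pimᵀ := by ext i j; simp [Matrix.conjTranspose_apply]
        conv_rhs => rw [hct, ← Matrix.mulVec_mulVec, dotProduct_mulVec,
          Matrix.vecMul_transpose]
      have h5 : lamK * (y ⬝ᵥ y) ≤ y ⬝ᵥ (Pimᴴ * Pim) *ᵥ y := quad_lower _ hμ lamK hlamKle y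
      calc c * (y ⬝ᵥ y) = θmin ^ 2 * (lamK * (y ⬝ᵥ y)) := by rw [hc]; ring
        _ ≤ θmin ^ 2 * (y ⬝ᵥ (Pimᴴ * Pim) *ᵥ y) := by
            exact mul_le_mul_of_nonneg_left h5 (by positivity)
        _ = θmin ^ 2 * ((Pim *ᵥ y) ⬝ᵥ (Pim *ᵥ y)) := by rw [h4]
        _ ≤ ∑ i, θ i ^ 2 * ((Pim *ᵥ y) i) ^ 2 := h3
        _ = y ⬝ᵥ M *ᵥ y := by rw [h1, h2]
    -- ‖B w‖² ≤ ‖w‖² / c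
    have hBw : ∀ w : Fin K → ℝ, c * ((B *ᵥ w) ⬝ᵥ (B *ᵥ w)) ≤ w ⬝ᵥ w := by
      intro w
      have h1 : (B *ᵥ w) ⬝ᵥ (M *ᵥ (B *ᵥ w)) = w ⬝ᵥ ((Bᵀ * M * B) *ᵥ w) := by
        conv_rhs => rw [← Matrix.mulVec_mulVec, ← Matrix.mulVec_mulVec,
          dotProduct_mulVec, Matrix.vecMul_transpose]
      calc c * ((B *ᵥ w) ⬝ᵥ (B *ᵥ w)) ≤ (B *ᵥ w) ⬝ᵥ M *ᵥ (B *ᵥ w) := hquad _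
        _ = w ⬝ᵥ w := by rw [h1, hBMB, Matrix.one_mulVec]
    -- ‖Bᵀ x‖² ≤ ‖x‖² / c
    have hBt : ∀ x : Fin K → ℝ, c * ((Bᵀ *ᵥ x) ⬝ᵥ (Bᵀ *ᵥ x)) ≤ x ⬝ᵥ x := by
      intro x
      set w : Fin K → ℝ := Bᵀ *ᵥ x with hw
      set s : ℝ := w ⬝ᵥ w with hs
      have hsnn : 0 ≤ s := Finset.sum_nonneg fun k _ => mul_self_nonneg _
      have hxnn : 0 ≤ x ⬝ᵥ x := Finset.sum_nonneg fun k _ => mul_self_nonneg _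
      rcases eq_or_lt_of_le hsnn with h | h
      · rw [← h, mul_zero]; exact hxnn
      · have h1 : s = (B *ᵥ w) ⬝ᵥ x := by
          rw [hs]
          nth_rewrite 2 [hw]
          rw [dotProduct_mulVec, Matrix.vecMul_transpose]
        have h2 : s ^ 2 ≤ ((B *ᵥ w) ⬝ᵥ (B *ᵥ w)) * (x ⬝ᵥ x) := by
          rw [h1]
          calc ((B *ᵥ w) ⬝ᵥ x) ^ 2 ≤ (∑ k, (B *ᵥ w) k ^ 2) * ∑ k, x k ^ 2 :=
                Finset.sum_mul_sq_le_sq_mul_sq Finset.univ _ _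
            _ = ((B *ᵥ w) ⬝ᵥ (B *ᵥ w)) * (x ⬝ᵥ x) := by
                simp [dotProduct, sq]
        have h3 : c * ((B *ᵥ w) ⬝ᵥ (B *ᵥ w)) ≤ s := hBw w
        -- c * s * s = c * s^2 ≤ c * ((Bw)⬝(Bw)) * (x⬝x) ≤ s * (x⬝x)
        have h4 : c * s * s ≤ (x ⬝ᵥ x) * s := by
          nlinarith [mul_le_mul_of_nonneg_right h3 hxnn]
        exact le_of_mul_le_mul_right h4 h
    -- final bound on each row
    refine Finset.sup'_le _ _ fun i _ => ?_
    set x : Fin K → ℝ := fun j => Pim i j with hx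
    have hrow : ∀ k, U i k = θ i * (Bᵀ *ᵥ x) k := by
      intro k
      rw [← hUB, Matrix.mul_apply]
      have hv : (Bᵀ *ᵥ x) k = ∑ j, B j k * x j := by
        simp [Matrix.mulVec, dotProduct, Matrix.transpose_apply]
      rw [hv, Finset.mul_sum]
      refine Finset.sum_congr rfl fun j _ => ?_
      rw [hT, Matrix.diagonal_mul]
      simp only [hx]
      ring
    have hrowsum : ∑ k, U i k ^ 2 = θ i ^ 2 * ((Bᵀ *ᵥ x) ⬝ᵥ (Bᵀ *ᵥ x)) := by
      rw [dotProduct, Finset.mul_sum]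
      refine Finset.sum_congr rfl fun k _ => ?_
      rw [hrow k]; ring
    have hx1 : x ⬝ᵥ x ≤ 1 := by
      rw [dotProduct]
      calc ∑ j, x j * x j = ∑ j, Pim i j ^ 2 := by
            refine Finset.sum_congr rfl fun j _ => ?_; rw [hx, sq]
        _ ≤ (∑ j, Pim i j) ^ 2 := Finset.sum_sq_le_sq_sum_of_nonneg fun j _ => hPimnn i j
        _ = 1 := by rw [hPimrow i, one_pow]
    rw [le_div_iff₀ hcpos, hrowsum]
    calc θ i ^ 2 * ((Bᵀ *ᵥ x) ⬝ᵥ (Bᵀ *ᵥ x)) * c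
        = θ i ^ 2 * (c * ((Bᵀ *ᵥ x) ⬝ᵥ (Bᵀ *ᵥ x))) := by ring
      _ ≤ θ i ^ 2 * 1 := by
          refine mul_le_mul_of_nonneg_left (le_trans (hBt x) hx1) (by positivity)
      _ ≤ θmax ^ 2 := by
          rw [mul_one]; exact pow_le_pow_left₀ (hθ i).le (hθiu i) 2
end

section
/- Suppose Π ∈ ℝ^{n×K} has nonnegative entries with rows summing to 1 and rank K, and there exists an index set I of K nodes (one pure node per community) with Π(I,:) = I_K. If Ω = ΘΠPΠ'Θ = Θ̃Π̃P̃Π̃'Θ̃ for two parameter sets satisfying the same conditions with P and P̃ having unit diagonals and rank K, then Π̃ = ΠΡ for some K×K permutation matrix Ρ (identifiability of the DCMMDF model). -/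
open Matrix

lemma aux_isUnit_of_rank_eq {K : ℕ} (A : Matrix (Fin K) (Fin K) ℝ) (h : A.rank = K) :
    IsUnit A := by
  rw [← Matrix.mulVec_surjective_iff_isUnit]
  have htop : LinearMap.range A.mulVecLin = ⊤ := by
    apply Submodule.eq_top_of_finrank_eq
    rw [Matrix.rank] at h
    simp [h]
  intro y
  obtain ⟨x, hx⟩ := LinearMap.range_eq_top.mp htop y
  exact ⟨x, by simpa [Matrix.mulVecLin_apply] using hx⟩

lemma aux_perm_of_nonneg {K : ℕ} (T U : Matrix (Fin K) (Fin K) ℝ)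
    (hT : ∀ k l, 0 ≤ T k l) (hU : ∀ k l, 0 ≤ U k l)
    (hTU : T * U = 1) (hUT : U * T = 1) (hrow : ∀ k, ∑ l, T k l = 1) :
    ∃ σ : Equiv.Perm (Fin K), ∀ k l, T k l = if l = σ k then 1 else 0 := by
  classical
  have hdiag : ∀ k, ∑ l, T k l * U l k = 1 := by
    intro k
    have := congrFun (congrFun hTU k) k
    simpa [Matrix.mul_apply, Matrix.one_apply] using this
  have hex : ∀ k, ∃ l, 0 < T k l ∧ 0 < U l k := by
    intro k
    by_contra hc
    push_neg at hc
    have hz : ∑ l, T k l * U l k = 0 := by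
      apply Finset.sum_eq_zero
      intro l _
      rcases lt_or_eq_of_le (hT k l) with h1 | h1
      · rcases lt_or_eq_of_le (hU l k) with h2 | h2
        · exact absurd h2 (by simpa using (hc l h1).not_gt)
        · rw [← h2, mul_zero]
      · rw [← h1, zero_mul]
    rw [hdiag k] at hz; norm_num at hz
  choose f hf1 hf2 using hex
  have hzero : ∀ k m, m ≠ f k → T k m = 0 := by
    intro k m hm
    have h0 : ∑ j, U (f k) j * T j m = 0 := by
      have := congrFun (congrFun hUT (f k)) m
      simpa [Matrix.mul_apply, Matrix.one_apply, (hm.symm : f k ≠ m)] using this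
    have := (Finset.sum_eq_zero_iff_of_nonneg (fun j _ => mul_nonneg (hU (f k) j) (hT j m))).mp h0 k (Finset.mem_univ k)
    rcases mul_eq_zero.mp this with h | h
    · exact absurd h (hf2 k).ne'
    · exact h
  have hone : ∀ k, T k (f k) = 1 := by
    intro k
    have := hrow k
    rwa [Finset.sum_eq_single (f k) (fun l _ hl => hzero k l hl) (by simp)] at this
  have hinj : Function.Injective f := by
    intro k k' hkk'
    by_contra hne
    have h0 : (T * U) k k' = 0 := by
      rw [hTU, Matrix.one_apply]; simp [hne]
    have h1 : (T * U) k' k' = 1 := by rw [hTU, Matrix.one_apply]; simp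
    rw [Matrix.mul_apply] at h0 h1
    rw [Finset.sum_eq_single (f k) (fun l _ hl => by rw [hzero k l hl, zero_mul]) (by simp)] at h0
    rw [Finset.sum_eq_single (f k') (fun l _ hl => by rw [hzero k' l hl, zero_mul]) (by simp)] at h1
    rw [hone k] at h0
    rw [hone k', ← hkk'] at h1
    rw [one_mul] at h0 h1
    rw [h0] at h1
    norm_num at h1
  refine ⟨Equiv.ofBijective f (Finite.injective_iff_bijective.mp hinj), fun k l => ?_⟩
  by_cases hl : l = f k
  · simp [hl, Equiv.ofBijective, hone k]
  · simp [Equiv.ofBijective, hl, hzero k l hl]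

/-- Identifiability of the DCMMDF model: if two parameter sets (Θ,Π,P) and
(Θ̃,Π̃,P̃), each satisfying the identifiability conditions (Π nonnegative with
rows summing to 1, rank K, a pure node for each community, P symmetric of
rank K with unit diagonal, Θ diagonal positive), generate the same expectation
matrix Ω = ΘΠPΠ'Θ = Θ̃Π̃P̃Π̃'Θ̃, then Π̃ = ΠΡ for a permutation matrix Ρ. -/
theorem dcmmdf_identifiability {n K : ℕ} (hK : 0 < K) (hKn : K ≤ n)
    (θ θt : Fin n → ℝ) (hθ : ∀ i, 0 < θ i) (hθt : ∀ i, 0 < θt i)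
    (Pim Pimt : Matrix (Fin n) (Fin K) ℝ)
    (hPimnn : ∀ i k, 0 ≤ Pim i k) (hPimrow : ∀ i, ∑ k, Pim i k = 1)
    (hPimrank : Pim.rank = K)
    (hPimtnn : ∀ i k, 0 ≤ Pimt i k) (hPimtrow : ∀ i, ∑ k, Pimt i k = 1)
    (hPimtrank : Pimt.rank = K)
    (I It : Fin K → Fin n)
    (hpure : Pim.submatrix I id = 1) (hpuret : Pimt.submatrix It id = 1)
    (P Pt : Matrix (Fin K) (Fin K) ℝ)
    (hPsymm : P.IsSymm) (hPrank : P.rank = K) (hPdiag : ∀ k, P k k = 1)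
    (hPtsymm : Pt.IsSymm) (hPtrank : Pt.rank = K) (hPtdiag : ∀ k, Pt k k = 1)
    (hΩ : Matrix.diagonal θ * Pim * P * Pimᵀ * Matrix.diagonal θ
        = Matrix.diagonal θt * Pimt * Pt * Pimtᵀ * Matrix.diagonal θt) :
    ∃ σ : Equiv.Perm (Fin K), ∀ i k, Pimt i k = Pim i (σ k) := by
  classical
  set d : Fin n → ℝ := fun i => θt i / θ i with hd
  have hdpos : ∀ i, 0 < d i := fun i => div_pos (hθt i) (hθ i)
  have hpure' : ∀ k l, Pim (I k) l = if k = l then (1:ℝ) else 0 := by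
    intro k l
    have := congrFun (congrFun hpure k) l
    simpa [Matrix.one_apply] using this
  have hpuret' : ∀ k l, Pimt (It k) l = if k = l then (1:ℝ) else 0 := by
    intro k l
    have := congrFun (congrFun hpuret k) l
    simpa [Matrix.one_apply] using this
  -- entrywise consequence of hΩ
  have hΩ' : Matrix.diagonal θ * (Pim * P * Pimᵀ) * Matrix.diagonal θ
      = Matrix.diagonal θt * (Pimt * Pt * Pimtᵀ) * Matrix.diagonal θt := by
    simp only [Matrix.mul_assoc] at hΩ ⊢; exact hΩ
  have hG : ∀ i j, (Pim * P * Pimᵀ) i j = d i * d j * (Pimt * Pt * Pimtᵀ) i j := by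
    intro i j
    have h := congrFun (congrFun hΩ' i) j
    simp only [Matrix.mul_diagonal, Matrix.diagonal_mul] at h
    have hθi := (hθ i).ne'
    have hθj := (hθ j).ne'
    rw [hd]
    field_simp
    linear_combination h
  set T : Matrix (Fin K) (Fin K) ℝ := Matrix.of (fun k l => Pim (It k) l) with hTdef
  set Tt : Matrix (Fin K) (Fin K) ℝ := Matrix.of (fun k l => Pimt (I k) l) with hTtdef
  set Dt : Matrix (Fin K) (Fin K) ℝ := Matrix.diagonal (fun k => d (It k)) with hDtdef
  set DI : Matrix (Fin K) (Fin K) ℝ := Matrix.diagonal (fun k => d (I k)) with hDIdef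
  set E : Matrix (Fin K) (Fin K) ℝ := Matrix.diagonal (fun k => (d (It k))⁻¹) with hEdef
  -- E1
  have E1 : T * P * Tᵀ = Dt * Pt * Dt := by
    ext k l
    have hg := hG (It k) (It l)
    have hL : (T * P * Tᵀ) k l = (Pim * P * Pimᵀ) (It k) (It l) := by
      simp [Matrix.mul_apply, hTdef]
    have hR : (Pimt * Pt * Pimtᵀ) (It k) (It l) = Pt k l := by
      simp [Matrix.mul_apply, hpuret']
    have hD : (Dt * Pt * Dt) k l = d (It k) * Pt k l * d (It l) := by
      simp [hDtdef]
    rw [hL, hg, hR, hD]; ring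
  -- E2
  have E2 : P * Tᵀ = DI * Tt * Pt * Dt := by
    ext k l
    have hg := hG (I k) (It l)
    have hL : (Pim * P * Pimᵀ) (I k) (It l) = (P * Tᵀ) k l := by
      simp [Matrix.mul_apply, hTdef, hpure']
    have hR : (Pimt * Pt * Pimtᵀ) (I k) (It l) = (Tt * Pt) k l := by
      simp [Matrix.mul_apply, hTtdef, hpuret']
    have hD : (DI * Tt * Pt * Dt) k l = d (I k) * (Tt * Pt) k l * d (It l) := by
      rw [hDIdef, hDtdef, Matrix.mul_diagonal, Matrix.mul_assoc, Matrix.diagonal_mul]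
    rw [← hL, hg, hR, hD]; ring
  -- E3
  have E3 : Pim * P * Tᵀ = Matrix.diagonal d * Pimt * Pt * Dt := by
    ext i l
    have hg := hG i (It l)
    have hL : (Pim * P * Tᵀ) i l = (Pim * P * Pimᵀ) i (It l) := by
      simp [Matrix.mul_apply, hTdef]
    have hR : (Pimt * Pt * Pimtᵀ) i (It l) = (Pimt * Pt) i l := by
      simp [Matrix.mul_apply, hpuret']
    have hD : (Matrix.diagonal d * Pimt * Pt * Dt) i l
        = d i * (Pimt * Pt) i l * d (It l) := by
      rw [hDtdef, Matrix.mul_diagonal, Matrix.mul_assoc, Matrix.diagonal_mul]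
    rw [hL, hg, hR, hD]; ring
  -- invertibility
  have hPunit : IsUnit P := aux_isUnit_of_rank_eq P hPrank
  have hPtunit : IsUnit Pt := aux_isUnit_of_rank_eq Pt hPtrank
  have hdetP : P.det ≠ 0 := by
    have := (Matrix.isUnit_iff_isUnit_det P).mp hPunit
    exact this.ne_zero
  have hdetPt : Pt.det ≠ 0 := by
    have := (Matrix.isUnit_iff_isUnit_det Pt).mp hPtunit
    exact this.ne_zero
  have hdetDt : Dt.det ≠ 0 := by
    rw [hDtdef, Matrix.det_diagonal]
    exact Finset.prod_ne_zero_iff.mpr fun k _ => (hdpos (It k)).ne'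
  have hdetT : T.det ≠ 0 := by
    have h := congrArg Matrix.det E1
    rw [Matrix.det_mul, Matrix.det_mul, Matrix.det_transpose,
        Matrix.det_mul, Matrix.det_mul] at h
    intro h0
    rw [h0, zero_mul, mul_zero] at h
    exact mul_ne_zero (mul_ne_zero hdetDt hdetPt) hdetDt h.symm
  have hTunit : IsUnit T := (Matrix.isUnit_iff_isUnit_det T).mpr (isUnit_iff_ne_zero.mpr hdetT)
  have hTtrunit : IsUnit Tᵀ := by
    rw [Matrix.isUnit_iff_isUnit_det, Matrix.det_transpose]
    exact isUnit_iff_ne_zero.mpr hdetT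
  have hPTunit : IsUnit (P * Tᵀ) := hPunit.mul hTtrunit
  have hEDt : E * Dt = 1 := by
    rw [hEdef, hDtdef, Matrix.diagonal_mul_diagonal]
    rw [show (fun k => (d (It k))⁻¹ * d (It k)) = fun _ => (1:ℝ) from
      funext fun k => inv_mul_cancel₀ (hdpos (It k)).ne']
    exact Matrix.diagonal_one
  -- Pt * Dt = E * (T * P * Tᵀ)
  have hPtDt : Pt * Dt = E * (T * P * Tᵀ) := by
    rw [E1, show E * (Dt * Pt * Dt) = (E * Dt) * (Pt * Dt) by noncomm_ring, hEDt, one_mul]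
  -- cancellation: U * T = 1
  have key : (DI * Tt * E * T) * (P * Tᵀ) = 1 * (P * Tᵀ) := by
    have h1 : (DI * Tt * E * T) * (P * Tᵀ) = DI * Tt * (E * (T * P * Tᵀ)) := by
      noncomm_ring
    rw [h1, ← hPtDt, show DI * Tt * (Pt * Dt) = DI * Tt * Pt * Dt by noncomm_ring,
        ← E2, one_mul]
  have hUT : (DI * Tt * E) * T = 1 := by
    have := hPTunit.mul_right_cancel key
    rwa [mul_assoc] at this ⊢
  have hTU : T * (DI * Tt * E) = 1 := mul_eq_one_comm.mp hUT
  have hUnn : ∀ k l, 0 ≤ (DI * Tt * E) k l := by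
    intro k l
    have : (DI * Tt * E) k l = d (I k) * Pimt (I k) l * (d (It l))⁻¹ := by
      simp [hDIdef, hEdef, hTtdef]
    rw [this]
    exact mul_nonneg (mul_nonneg (hdpos (I k)).le (hPimtnn (I k) l)) (inv_nonneg.mpr (hdpos (It l)).le)
  have hTnn : ∀ k l, 0 ≤ T k l := fun k l => hPimnn (It k) l
  have hTrow : ∀ k, ∑ l, T k l = 1 := fun k => hPimrow (It k)
  obtain ⟨σ, hσ⟩ := aux_perm_of_nonneg T (DI * Tt * E) hTnn hUnn hTU hUT hTrow
  -- d (It k) = 1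
  have hdIt : ∀ k, d (It k) = 1 := by
    intro k
    have h1 : (T * P * Tᵀ) k k = P (σ k) (σ k) := by
      simp [Matrix.mul_apply, hσ]
    have h2 := congrFun (congrFun E1 k) k
    rw [h1, hPdiag] at h2
    have h3 : (Dt * Pt * Dt) k k = d (It k) * Pt k k * d (It k) := by
      simp [hDtdef]
    rw [h3, hPtdiag] at h2
    nlinarith [hdpos (It k)]
  have hDt1 : Dt = 1 := by
    rw [hDtdef, show (fun k => d (It k)) = fun _ => (1:ℝ) from funext hdIt]
    exact Matrix.diagonal_one
  -- Pim = diagonal d * Pimt * T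
  have hPt_eq : Pt = T * P * Tᵀ := by rw [E1, hDt1, mul_one, one_mul]
  have hfinal : Pim * (P * Tᵀ) = (Matrix.diagonal d * Pimt * T) * (P * Tᵀ) := by
    have h5 : Pim * (P * Tᵀ) = Matrix.diagonal d * Pimt * (T * (P * Tᵀ)) := by
      rw [← Matrix.mul_assoc Pim, E3, hDt1, Matrix.mul_one, hPt_eq,
        Matrix.mul_assoc T P Tᵀ]
    rw [h5, Matrix.mul_assoc (Matrix.diagonal d * Pimt) T (P * Tᵀ)]
  have hinvPT : (P * Tᵀ) * (P * Tᵀ)⁻¹ = 1 :=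
    Matrix.mul_nonsing_inv _ ((Matrix.isUnit_iff_isUnit_det _).mp hPTunit)
  have hPimEq : Pim = Matrix.diagonal d * Pimt * T := by
    calc Pim = Pim * ((P * Tᵀ) * (P * Tᵀ)⁻¹) := by rw [hinvPT, Matrix.mul_one]
      _ = (Pim * (P * Tᵀ)) * (P * Tᵀ)⁻¹ := (Matrix.mul_assoc _ _ _).symm
      _ = ((Matrix.diagonal d * Pimt * T) * (P * Tᵀ)) * (P * Tᵀ)⁻¹ := by rw [hfinal]
      _ = (Matrix.diagonal d * Pimt * T) * ((P * Tᵀ) * (P * Tᵀ)⁻¹) := by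
          rw [Matrix.mul_assoc]
      _ = Matrix.diagonal d * Pimt * T := by rw [hinvPT, Matrix.mul_one]
  have hPimEntry : ∀ i l, Pim i l = d i * Pimt i (σ.symm l) := by
    intro i l
    have h := congrFun (congrFun hPimEq i) l
    rw [h]
    have : ∀ m, (Matrix.diagonal d * Pimt) i m * T m l
        = if m = σ.symm l then d i * Pimt i (σ.symm l) else 0 := by
      intro m
      rw [hσ]
      by_cases hm : m = σ.symm l
      · simp [hm, Matrix.diagonal_mul]
      · have : l ≠ σ m := fun hc => hm (by rw [hc, Equiv.symm_apply_apply])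
        simp [Matrix.diagonal_mul, this, hm]
    rw [Matrix.mul_apply]
    rw [Finset.sum_congr rfl (fun m _ => this m)]
    simp
  have hdi : ∀ i, d i = 1 := by
    intro i
    have h1 : (1:ℝ) = d i * ∑ l, Pimt i (σ.symm l) := by
      rw [← hPimrow i, Finset.mul_sum]
      exact Finset.sum_congr rfl fun l _ => hPimEntry i l
    rw [Equiv.sum_comp σ.symm (fun m => Pimt i m), hPimtrow i, mul_one] at h1
    exact h1.symm
  refine ⟨σ, fun i k => ?_⟩
  have := hPimEntry i (σ k)
  rw [hdi i, one_mul, Equiv.symm_apply_apply] at this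
  exact this.symm
end

section
/- Let U_* be the row-normalization of U (U_*(i,:) = U(i,:)/‖U(i,:)‖), where U is the orthonormal eigenvector matrix of Ω = ΘΠPΠ'Θ with rank K, and all rows of U are nonzero. If I indexes K pure nodes (one per community) with Π(I,:) = I_K, then there exists a nonnegative n×K matrix Y such that U_* = Y·U_*(I,:), i.e., every row of U_* is a nonnegative combination of the K pure-node rows (the Ideal Cone structure). -/
open Matrix

/-- The Ideal Cone structure: with U the orthonormal eigenvector matrix of
Ω = ΘΠPΠ'Θ, all rows of U nonzero, U_* the row-normalized version of U, and I
the pure node index set with Π(I,:) = I_K, there exists a nonnegative matrix Y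
with U_* = Y·U_*(I,:). -/
theorem ideal_cone {n K : ℕ} (hK : 0 < K) (hKn : K ≤ n)
    (θ : Fin n → ℝ) (hθ : ∀ i, 0 < θ i)
    (Pim : Matrix (Fin n) (Fin K) ℝ) (hPimrank : Pim.rank = K)
    (hPimnn : ∀ i k, 0 ≤ Pim i k) (hPimrow : ∀ i, ∑ k, Pim i k = 1)
    (I : Fin K → Fin n) (hpure : Pim.submatrix I id = 1)
    (P : Matrix (Fin K) (Fin K) ℝ) (hPsymm : P.IsSymm) (hPrank : P.rank = K)
    (U : Matrix (Fin n) (Fin K) ℝ) (lam : Fin K → ℝ) (hlam : ∀ k, lam k ≠ 0)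
    (hU : Uᵀ * U = 1)
    (hΩ : Matrix.diagonal θ * Pim * P * Pimᵀ * Matrix.diagonal θ
        = U * Matrix.diagonal lam * Uᵀ)
    (hrows : ∀ i, U i ≠ 0)
    (Ustar : Matrix (Fin n) (Fin K) ℝ)
    (hUstar : ∀ i k, Ustar i k = U i k / Real.sqrt (∑ l, U i l ^ 2)) :
    ∃ Y : Matrix (Fin n) (Fin K) ℝ,
      (∀ i k, 0 ≤ Y i k) ∧ Ustar = Y * Ustar.submatrix I id := by
  classical
  set M : Matrix (Fin K) (Fin K) ℝ :=
    P * Pimᵀ * Matrix.diagonal θ * U * Matrix.diagonal (fun k => (lam k)⁻¹) with hMdef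
  -- key identity: Θ Π M = U
  have hdiag : Matrix.diagonal lam * Matrix.diagonal (fun k => (lam k)⁻¹)
      = (1 : Matrix (Fin K) (Fin K) ℝ) := by
    rw [Matrix.diagonal_mul_diagonal]
    have : (fun k => lam k * (lam k)⁻¹) = fun _ => (1 : ℝ) :=
      funext fun k => mul_inv_cancel₀ (hlam k)
    rw [this, Matrix.diagonal_one]
  have hM : Matrix.diagonal θ * Pim * M = U := by
    have h1 : Matrix.diagonal θ * Pim * M
        = (Matrix.diagonal θ * Pim * P * Pimᵀ * Matrix.diagonal θ)
          * (U * Matrix.diagonal (fun k => (lam k)⁻¹)) := by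
      simp only [hMdef, Matrix.mul_assoc]
    rw [hΩ] at h1
    calc Matrix.diagonal θ * Pim * M
        = U * (Matrix.diagonal lam * ((Uᵀ * U) * Matrix.diagonal (fun k => (lam k)⁻¹))) := by
          rw [h1]; simp only [Matrix.mul_assoc]
      _ = U := by rw [hU, Matrix.one_mul, hdiag, Matrix.mul_one]
  have hMe : ∀ i k, ∑ j, θ i * Pim i j * M j k = U i k := by
    intro i k
    have := congrFun (congrFun hM i) k
    simpa [Matrix.mul_apply, Matrix.diagonal_apply, ite_mul, zero_mul,
      Finset.sum_ite_eq, Finset.mem_univ] using this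
  have hp : ∀ k' j, Pim (I k') j = if k' = j then (1 : ℝ) else 0 := by
    intro k' j
    have := congrFun (congrFun hpure k') j
    simpa [Matrix.submatrix_apply, Matrix.one_apply] using this
  -- pure node rows
  have hMI : ∀ k' k, M k' k = U (I k') k / θ (I k') := by
    intro k' k
    have h := hMe (I k') k
    have hsum : ∑ j, θ (I k') * Pim (I k') j * M j k = θ (I k') * M k' k := by
      rw [Finset.sum_congr rfl (fun j _ => by rw [hp k' j])]
      simp
    rw [hsum] at h
    field_simp [(hθ (I k')).ne']
    linarith [h]
  -- row norms
  set nr : Fin n → ℝ := fun i => Real.sqrt (∑ l, U i l ^ 2) with hnr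
  have hnrpos : ∀ i, 0 < nr i := by
    intro i
    apply Real.sqrt_pos.mpr
    obtain ⟨l, hl⟩ := Function.ne_iff.mp (hrows i)
    exact Finset.sum_pos' (fun l _ => sq_nonneg _)
      ⟨l, Finset.mem_univ l, by
        have : 0 < |U i l| := abs_pos.mpr hl
        calc (0:ℝ) < |U i l| ^ 2 := by positivity
          _ = U i l ^ 2 := sq_abs _⟩
  refine ⟨fun i j => θ i * Pim i j * nr (I j) / (θ (I j) * nr i), ?_, ?_⟩
  · intro i j
    have := hθ i
    have := hPimnn i j
    have := (hnrpos (I j)).le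
    have := hθ (I j)
    have := hnrpos i
    positivity
  · ext i k
    have hUi : U i k = ∑ j, θ i * Pim i j * (U (I j) k / θ (I j)) := by
      rw [← hMe i k]
      exact Finset.sum_congr rfl fun j _ => by rw [hMI j k]
    show Ustar i k = ∑ j, (θ i * Pim i j * nr (I j) / (θ (I j) * nr i)) * Ustar.submatrix I id j k
    rw [hUstar i k, hUi, Finset.sum_div]
    refine Finset.sum_congr rfl fun j _ => ?_
    rw [Matrix.submatrix_apply, id_eq, hUstar (I j) k]
    have h1 : θ (I j) ≠ 0 := (hθ (I j)).ne'
    have h2 : nr i ≠ 0 := (hnrpos i).ne'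
    have h3 : nr (I j) ≠ 0 := (hnrpos (I j)).ne'
    simp only [hnr] at h2 h3 ⊢
    field_simp
end
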